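/- arXiv:2508.14803 — 2 statements merged into one kernel-verified Lean document; each statement's English description precedes it below -/
import Mathlib

section
/- Let 2 ≤ ℓ ≤ m and 0 ≤ p ≠ q < 2^m with |φ(p) - φ(q)| < 2^{-ℓ+1}, where φ(n) = Σ n_i 2^{-i}. Suppose there exists 2 ≤ k ≤ ℓ-1 with (p⊕q)_{k-1} = 0 and (p⊕q)_k = 1. Then (p⊕q)_i = 0 for 1 ≤ i ≤ k-1, (p⊕q)_i = 1 for k ≤ i ≤ ℓ-1, and (p⊕q)_i ≠ 0 for some ℓ ≤ i ≤ m. -/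
open Finset

/-- The `i`-th binary digit of `n` (1-indexed: `n = Σ nᵢ 2^(i-1)`). -/
def bit (n i : ℕ) : ℕ := if Nat.testBit n (i-1) then 1 else 0

/-- `φ` of the digit vector of `n` truncated to `m` digits: `Σ nᵢ 2^(-i)`. -/
noncomputable def phi (m n : ℕ) : ℝ :=
  ∑ i ∈ Finset.Icc 1 m, (bit n i : ℝ) * (2:ℝ) ^ (-(i:ℤ))

/-- The `i`-th coordinate of `P_m · (digit vector of n)` over `F₂`, where
`P_m[i][j] = C(j-1, i-1) mod 2` is the upper-triangular Pascal matrix. -/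
def pbit (m n i : ℕ) : ℕ :=
  (∑ j ∈ Finset.Icc 1 m, (Nat.choose (j-1) (i-1) % 2) * bit n j) % 2

/-- `φ(P_m · n)`. -/
noncomputable def phiP (m n : ℕ) : ℝ :=
  ∑ i ∈ Finset.Icc 1 m, (pbit m n i : ℝ) * (2:ℝ) ^ (-(i:ℤ))

/-- The `n`-th point of the two-dimensional Sobol' sequence (with `n < 2^m`). -/
noncomputable def sobol (m n : ℕ) : ℝ × ℝ := (phi m n, phiP m n)

/-- ℓ^∞ distance on ℝ². -/
noncomputable def linf (a b : ℝ × ℝ) : ℝ := max |a.1 - b.1| |a.2 - b.2|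

/-- ℓ^∞ separation radius of the first `N` Sobol' points (digit length `m`). -/
noncomputable def sep (m N : ℕ) : ℝ :=
  (1/2) * sInf {d : ℝ | ∃ p q : ℕ, p < N ∧ q < N ∧ p ≠ q ∧ d = linf (sobol m p) (sobol m q)}

/-- ℓ^∞ covering radius of the first `N` Sobol' points (digit length `m`). -/
noncomputable def cov (m N : ℕ) : ℝ :=
  sSup {r : ℝ | ∃ x : ℝ × ℝ, x.1 ∈ Set.Icc (0:ℝ) 1 ∧ x.2 ∈ Set.Icc (0:ℝ) 1 ∧
    r = sInf {d : ℝ | ∃ n : ℕ, n < N ∧ d = linf x (sobol m n)}}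

/-!
Write `d = p ⊕ q` and `δ = φ(q) - φ(p) = Σ (qᵢ - pᵢ) 2^{-i}`, so that `|qᵢ - pᵢ| = dᵢ`.
If `j` is the first index with `dⱼ = 1`, the leading term of `δ` has size `2^{-j}` and the
tail is at most `Σ_{i > j} dᵢ 2^{-i}`; a zero digit `dᵢ₀ = 0` with `i₀ > j` therefore forces
`|δ| > 2^{-i₀}`, and vanishing digits beyond `n` force `|δ| ≥ 2^{-n}`. Against
`|δ| < 2^{-(ℓ-1)}` the first estimate rules out a one before position `k - 1` and a zero
in `[k, ℓ-1]`, and the second rules out `d` vanishing on `[ℓ, m]`.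
-/

lemma bit_le_one (n i : ℕ) : bit n i ≤ 1 := by
  unfold bit; split <;> simp

lemma bit_xor_eq_abs_sub (p q i : ℕ) :
    (bit (p ^^^ q) i : ℝ) = |(bit q i : ℝ) - bit p i| := by
  unfold bit
  cases hp : Nat.testBit p (i - 1) <;> cases hq : Nat.testBit q (i - 1) <;>
    simp [Nat.testBit_xor, hp, hq]

lemma bit_mul_two_zpow_le (n i : ℕ) : (bit n i : ℝ) * 2 ^ (-(i : ℤ)) ≤ 2 ^ (-(i : ℤ)) :=
  mul_le_of_le_one_left (by positivity) (by exact_mod_cast bit_le_one n i)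

lemma sum_Ioc_two_zpow_neg {a b : ℕ} (hab : a ≤ b) :
    ∑ i ∈ Ioc a b, (2 : ℝ) ^ (-(i : ℤ)) = 2 ^ (-(a : ℤ)) - 2 ^ (-(b : ℤ)) := by
  induction b, hab using Nat.le_induction with
  | base => simp
  | succ b hab ih =>
    rw [← Icc_add_one_left_eq_Ioc] at ih ⊢
    rw [sum_Icc_succ_top (by omega), ih]
    have half : (2 : ℝ) ^ (-((b + 1 : ℕ) : ℤ)) = 2 ^ (-(b : ℤ)) / 2 := by
      rw [Nat.cast_succ, neg_add, zpow_add₀ two_ne_zero]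
      norm_num
      ring
    rw [half]
    ring

section FirstDifference

variable {m p q j : ℕ}

lemma two_zpow_sub_tail_le_abs_phi_sub (hj1 : 1 ≤ j) (hjm : j ≤ m)
    (hbj : bit (p ^^^ q) j = 1) (hbelow : ∀ i ∈ Ico 1 j, bit (p ^^^ q) i = 0) :
    (2 : ℝ) ^ (-(j : ℤ)) - ∑ i ∈ Ioc j m, (bit (p ^^^ q) i : ℝ) * 2 ^ (-(i : ℤ))
      ≤ |phi m q - phi m p| := by
  set d : ℕ → ℝ := fun i => ((bit q i : ℝ) - bit p i) * 2 ^ (-(i : ℤ)) with hd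
  have abs_d (i : ℕ) : |d i| = (bit (p ^^^ q) i : ℝ) * 2 ^ (-(i : ℤ)) := by
    rw [hd, abs_mul, ← bit_xor_eq_abs_sub, abs_of_pos (by positivity)]
  have d_below : ∀ i ∈ Ico 1 j, d i = 0 := fun i hi => by
    rw [← abs_eq_zero, abs_d, hbelow i hi, Nat.cast_zero, zero_mul]
  have hδ : phi m q - phi m p = d j + ∑ i ∈ Ioc j m, d i := by
    have hsplit : Icc 1 m = Ico 1 j ∪ insert j (Ioc j m) := by
      ext i; simp only [mem_union, mem_insert, mem_Icc, mem_Ico, mem_Ioc]; omega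
    have hsum : phi m q - phi m p = ∑ i ∈ Icc 1 m, d i := by
      simp only [phi, hd, sub_mul, sum_sub_distrib]
    rw [hsum, hsplit, sum_union (by simp [disjoint_left]; omega),
      sum_insert (by simp), sum_eq_zero d_below, zero_add]
  have htail : |∑ i ∈ Ioc j m, d i| ≤ ∑ i ∈ Ioc j m, (bit (p ^^^ q) i : ℝ) * 2 ^ (-(i : ℤ)) :=
    (abs_sum_le_sum_abs _ _).trans_eq (sum_congr rfl fun i _ => abs_d i)
  have hlead : |d j| = 2 ^ (-(j : ℤ)) := by rw [abs_d, hbj, Nat.cast_one, one_mul]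
  rw [hδ]
  linarith [abs_sub_abs_le_abs_add (d j) (∑ i ∈ Ioc j m, d i)]

lemma two_zpow_lt_abs_phi_sub_of_bit_eq_zero {i₀ : ℕ} (hj1 : 1 ≤ j) (hji₀ : j < i₀)
    (hi₀m : i₀ ≤ m) (hbj : bit (p ^^^ q) j = 1) (hbelow : ∀ i ∈ Ico 1 j, bit (p ^^^ q) i = 0)
    (hi₀ : bit (p ^^^ q) i₀ = 0) :
    (2 : ℝ) ^ (-(i₀ : ℤ)) < |phi m q - phi m p| := by
  have hmem : i₀ ∈ Ioc j m := mem_Ioc.mpr ⟨hji₀, hi₀m⟩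
  have htail : ∑ i ∈ Ioc j m, (bit (p ^^^ q) i : ℝ) * 2 ^ (-(i : ℤ))
      ≤ 2 ^ (-(j : ℤ)) - 2 ^ (-(m : ℤ)) - 2 ^ (-(i₀ : ℤ)) :=
    calc ∑ i ∈ Ioc j m, (bit (p ^^^ q) i : ℝ) * 2 ^ (-(i : ℤ))
        = ∑ i ∈ (Ioc j m).erase i₀, (bit (p ^^^ q) i : ℝ) * 2 ^ (-(i : ℤ)) :=
          (sum_erase _ (by simp [hi₀])).symm
      _ ≤ ∑ i ∈ (Ioc j m).erase i₀, (2 : ℝ) ^ (-(i : ℤ)) :=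
          sum_le_sum fun i _ => bit_mul_two_zpow_le _ i
      _ = 2 ^ (-(j : ℤ)) - 2 ^ (-(m : ℤ)) - 2 ^ (-(i₀ : ℤ)) := by
          rw [sum_erase_eq_sub hmem, sum_Ioc_two_zpow_neg (by omega)]
  have := two_zpow_sub_tail_le_abs_phi_sub hj1 (hji₀.le.trans hi₀m) hbj hbelow
  linarith [zpow_pos (two_pos : (0 : ℝ) < 2) (-(m : ℤ))]

lemma two_zpow_le_abs_phi_sub_of_bits_eq_zero {n : ℕ} (hj1 : 1 ≤ j) (hjn : j ≤ n)
    (hnm : n ≤ m) (hbj : bit (p ^^^ q) j = 1) (hbelow : ∀ i ∈ Ico 1 j, bit (p ^^^ q) i = 0)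
    (habove : ∀ i ∈ Ioc n m, bit (p ^^^ q) i = 0) :
    (2 : ℝ) ^ (-(n : ℤ)) ≤ |phi m q - phi m p| := by
  have htail : ∑ i ∈ Ioc j m, (bit (p ^^^ q) i : ℝ) * 2 ^ (-(i : ℤ))
      ≤ 2 ^ (-(j : ℤ)) - 2 ^ (-(n : ℤ)) :=
    calc ∑ i ∈ Ioc j m, (bit (p ^^^ q) i : ℝ) * 2 ^ (-(i : ℤ))
        = ∑ i ∈ Ioc j n, (bit (p ^^^ q) i : ℝ) * 2 ^ (-(i : ℤ)) := by
          rw [← sum_Ioc_consecutive _ hjn hnm, add_eq_left]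
          exact sum_eq_zero fun i hi => by simp [habove i hi]
      _ ≤ ∑ i ∈ Ioc j n, (2 : ℝ) ^ (-(i : ℤ)) := sum_le_sum fun i _ => bit_mul_two_zpow_le _ i
      _ = 2 ^ (-(j : ℤ)) - 2 ^ (-(n : ℤ)) := sum_Ioc_two_zpow_neg hjn
  have := two_zpow_sub_tail_le_abs_phi_sub hj1 (hjn.trans hnm) hbj hbelow
  linarith

lemma bit_xor_eq_zero_of_abs_phi_sub_le {n : ℕ} (hnm : n ≤ m) (hn : bit (p ^^^ q) n = 0)
    (hδ : |phi m q - phi m p| ≤ 2 ^ (-(n : ℤ))) : ∀ i ∈ Icc 1 n, bit (p ^^^ q) i = 0 := by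
  intro i hi
  induction i using Nat.strong_induction_on with
  | _ i ih =>
    rw [mem_Icc] at hi
    by_contra hne
    have hbi : bit (p ^^^ q) i = 1 := by have := bit_le_one (p ^^^ q) i; omega
    have hin : i < n := lt_of_le_of_ne hi.2 fun h => hne (h ▸ hn)
    have hbelow : ∀ i' ∈ Ico 1 i, bit (p ^^^ q) i' = 0 := fun i' hi' => by
      rw [mem_Ico] at hi'
      exact ih i' hi'.2 (mem_Icc.mpr ⟨hi'.1, by omega⟩)
    have := two_zpow_lt_abs_phi_sub_of_bit_eq_zero hi.1 hin hnm hbi hbelow hn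
    linarith

lemma bit_xor_eq_one_of_abs_phi_sub_le {n : ℕ} (hj1 : 1 ≤ j) (hnm : n ≤ m)
    (hbj : bit (p ^^^ q) j = 1) (hbelow : ∀ i ∈ Ico 1 j, bit (p ^^^ q) i = 0)
    (hδ : |phi m q - phi m p| ≤ 2 ^ (-(n : ℤ))) : ∀ i ∈ Icc j n, bit (p ^^^ q) i = 1 := by
  intro i hi
  rw [mem_Icc] at hi
  by_contra hne
  have hbi : bit (p ^^^ q) i = 0 := by have := bit_le_one (p ^^^ q) i; omega
  have hji : j < i := lt_of_le_of_ne hi.1 fun h => hne (h ▸ hbj)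
  have := two_zpow_lt_abs_phi_sub_of_bit_eq_zero hj1 hji (hi.2.trans hnm) hbj hbelow hbi
  linarith [zpow_le_zpow_right₀ (one_le_two : (1 : ℝ) ≤ 2) (by omega : -(n : ℤ) ≤ -(i : ℤ))]

end FirstDifference

theorem stmt_10_general (ℓ m p q k : ℕ) (hℓm : ℓ ≤ m)
    (h1 : |phi m q - phi m p| < (2:ℝ) ^ (-(ℓ:ℤ) + 1))
    (hk1 : 2 ≤ k) (hk2 : k ≤ ℓ - 1)
    (hkm1 : bit (p ^^^ q) (k - 1) = 0) (hkk : bit (p ^^^ q) k = 1) :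
    (∀ i ∈ Finset.Icc 1 (k - 1), bit (p ^^^ q) i = 0) ∧
    (∀ i ∈ Finset.Icc k (ℓ - 1), bit (p ^^^ q) i = 1) ∧
    (∃ i ∈ Finset.Icc ℓ m, bit (p ^^^ q) i ≠ 0) := by
  have hδ : |phi m q - phi m p| < 2 ^ (-((ℓ - 1 : ℕ) : ℤ)) := by
    rwa [Nat.cast_sub (by omega), Nat.cast_one, neg_sub', sub_neg_eq_add]
  have below : ∀ i ∈ Icc 1 (k - 1), bit (p ^^^ q) i = 0 :=
    bit_xor_eq_zero_of_abs_phi_sub_le (by omega) hkm1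
      (hδ.le.trans (zpow_le_zpow_right₀ one_le_two (by omega)))
  have hbelow : ∀ i ∈ Ico 1 k, bit (p ^^^ q) i = 0 := fun i hi => by
    rw [mem_Ico] at hi
    exact below i (mem_Icc.mpr ⟨hi.1, by omega⟩)
  refine ⟨below, bit_xor_eq_one_of_abs_phi_sub_le (by omega) (by omega) hkk hbelow hδ.le, ?_⟩
  by_contra! habove
  have habove' : ∀ i ∈ Ioc (ℓ - 1) m, bit (p ^^^ q) i = 0 := fun i hi => by
    rw [mem_Ioc] at hi
    exact habove i (mem_Icc.mpr ⟨by omega, hi.2⟩)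
  have := two_zpow_le_abs_phi_sub_of_bits_eq_zero (by omega) hk2 (by omega) hkk hbelow habove'
  linarith

theorem stmt_10 (ℓ m p q k : ℕ) (hℓ : 2 ≤ ℓ) (hℓm : ℓ ≤ m)
    (hp : p < 2 ^ m) (hq : q < 2 ^ m) (hpq : p ≠ q)
    (h1 : |phi m q - phi m p| < (2:ℝ) ^ (-(ℓ:ℤ) + 1))
    (hk1 : 2 ≤ k) (hk2 : k ≤ ℓ - 1)
    (hkm1 : bit (p ^^^ q) (k - 1) = 0) (hkk : bit (p ^^^ q) k = 1) :
    (∀ i ∈ Finset.Icc 1 (k - 1), bit (p ^^^ q) i = 0) ∧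
    (∀ i ∈ Finset.Icc k (ℓ - 1), bit (p ^^^ q) i = 1) ∧
    (∃ i ∈ Finset.Icc ℓ m, bit (p ^^^ q) i ≠ 0) :=
  stmt_10_general ℓ m p q k hℓm h1 hk1 hk2 hkm1 hkk
end

section
/- Let v > w ≥ 0, V = 2^v, W = 2^w, and m ≥ V + W. For q = 2^{V+W} - 2^W, the q-th point of the two-dimensional Sobol' sequence is x_q = (2^{-W} - 2^{-V-W}, 2^{-V} + 2^{-V-W}). -/
open Finset

/-!
The index `q = 2^(V+W) - 2^W = (2^V - 1) * 2^W` has its binary digits equal to `1` exactly in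
positions `W+1, …, V+W`, so `φ(q)` is a geometric sum. Row `i` of the Pascal matrix applied to
these digits gives `∑_{k=W}^{V+W-1} C(k, i-1) = C(V+W, i) - C(W, i)` (hockey stick), and modulo 2
this is the coefficient of `X^i` in `(1+X)^(V+W) - (1+X)^W = (1+X^W) X^V`, by the Frobenius
identity `(1+X)^(2^k) = 1+X^(2^k)`. Hence the digits of `P_m q` are `1` exactly at `V` and `V+W`.
-/

lemma bit_two_pow_add_sub_two_pow (a b : ℕ) {i : ℕ} (hi : 1 ≤ i) :
    bit (2 ^ (a + b) - 2 ^ b) i = if i ∈ Icc (b + 1) (a + b) then 1 else 0 := by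
  have hshift : 2 ^ (a + b) - 2 ^ b = (2 ^ a - 1) <<< b := by
    rw [Nat.shiftLeft_eq, Nat.sub_mul, one_mul, ← pow_add]
  have hrange : (b ≤ i - 1 ∧ i - 1 - b < a) ↔ i ∈ Icc (b + 1) (a + b) := by
    rw [mem_Icc]; omega
  simp only [bit, hshift, Nat.testBit_shiftLeft, Nat.testBit_two_pow_sub_one, ge_iff_le,
    Bool.and_eq_true, decide_eq_true_eq, hrange]

lemma sum_Icc_indicator_mul {R : Type*} [Semiring R] {m : ℕ} {S : Finset ℕ}
    (hS : S ⊆ Icc 1 m) {c : ℕ → ℕ} (hc : ∀ i ∈ Icc 1 m, c i = if i ∈ S then 1 else 0)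
    (f : ℕ → R) : ∑ i ∈ Icc 1 m, (c i : R) * f i = ∑ i ∈ S, f i := by
  rw [sum_congr rfl fun i hi ↦ by rw [hc i hi], ← sum_subset hS fun i _ hi ↦ by simp [hi]]
  exact sum_congr rfl fun i hi ↦ by simp [hi]

lemma sum_Icc_two_zpow_neg {a b : ℕ} (hab : a ≤ b) :
    ∑ i ∈ Icc (a + 1) b, (2 : ℝ) ^ (-(i : ℤ)) = 2 ^ (-(a : ℤ)) - 2 ^ (-(b : ℤ)) := by
  induction b, hab using Nat.le_induction with
  | base => simp
  | succ b hab ih =>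
    rw [sum_Icc_succ_top (by omega), ih, Nat.cast_succ, neg_add, zpow_add₀ two_ne_zero]
    ring

lemma sum_Icc_choose_sub_one (k : ℕ) {a b : ℕ} (hab : a ≤ b) :
    ∑ j ∈ Icc (a + 1) b, (j - 1).choose k = b.choose (k + 1) - a.choose (k + 1) := by
  induction b, hab using Nat.le_induction with
  | base => simp
  | succ b hab ih =>
    have := Nat.choose_le_choose (k + 1) hab
    rw [sum_Icc_succ_top (by omega), ih, Nat.add_sub_cancel, Nat.choose_succ_succ' b]
    omega

open Polynomial in
lemma choose_two_pow_add_sub_choose_two_pow (v w i : ℕ) :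
    ((2 ^ v + 2 ^ w).choose i : ZMod 2) - (2 ^ w).choose i =
      (if i = 2 ^ v then 1 else 0) + (if i = 2 ^ v + 2 ^ w then 1 else 0) := by
  have hpoly : ((X + 1 : (ZMod 2)[X]) ^ (2 ^ v + 2 ^ w) - (X + 1) ^ 2 ^ w) =
      X ^ 2 ^ v + X ^ (2 ^ v + 2 ^ w) := by
    rw [pow_add, add_pow_char_pow, add_pow_char_pow]
    ring
  simpa [coeff_X_add_one_pow, coeff_X_pow, eq_comm] using congrArg (coeff · i) hpoly

section Digits

variable {m n : ℕ} {S : Finset ℕ}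

lemma phi_eq_sum_of_bit (hS : S ⊆ Icc 1 m)
    (hn : ∀ i ∈ Icc 1 m, bit n i = if i ∈ S then 1 else 0) :
    phi m n = ∑ i ∈ S, (2 : ℝ) ^ (-(i : ℤ)) :=
  sum_Icc_indicator_mul hS hn _

lemma natCast_pbit_eq_of_bit (hS : S ⊆ Icc 1 m)
    (hn : ∀ i ∈ Icc 1 m, bit n i = if i ∈ S then 1 else 0) (i : ℕ) :
    (pbit m n i : ZMod 2) = ∑ j ∈ S, ((j - 1).choose (i - 1) : ZMod 2) := by
  simp only [pbit, ZMod.natCast_mod, Nat.cast_sum, Nat.cast_mul, mul_comm _ (bit n _ : ZMod 2)]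
  exact sum_Icc_indicator_mul hS hn _

lemma pbit_eq_of_natCast_eq {i b : ℕ} (hb : b < 2) (h : (pbit m n i : ZMod 2) = b) :
    pbit m n i = b := by
  have hlt : pbit m n i < 2 := Nat.mod_lt _ two_pos
  rwa [ZMod.natCast_eq_natCast_iff', Nat.mod_eq_of_lt hlt, Nat.mod_eq_of_lt hb] at h

lemma phiP_eq_sum_of_pbit (hS : S ⊆ Icc 1 m)
    (hn : ∀ i ∈ Icc 1 m, pbit m n i = if i ∈ S then 1 else 0) :
    phiP m n = ∑ i ∈ S, (2 : ℝ) ^ (-(i : ℤ)) :=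
  sum_Icc_indicator_mul hS hn _

end Digits

lemma pbit_two_pow_add_sub_two_pow (v w : ℕ) {m i : ℕ} (hm : 2 ^ v + 2 ^ w ≤ m)
    (hi : 1 ≤ i) :
    pbit m (2 ^ (2 ^ v + 2 ^ w) - 2 ^ 2 ^ w) i =
      if i ∈ ({2 ^ v, 2 ^ v + 2 ^ w} : Finset ℕ) then 1 else 0 := by
  have hw : 0 < 2 ^ w := Nat.two_pow_pos w
  have hS : Icc (2 ^ w + 1) (2 ^ v + 2 ^ w) ⊆ Icc 1 m := Icc_subset_Icc (by omega) hm
  have hbit := fun j (hj : j ∈ Icc 1 m) ↦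
    bit_two_pow_add_sub_two_pow (2 ^ v) (2 ^ w) (mem_Icc.1 hj).1
  have hsum : ∑ j ∈ Icc (2 ^ w + 1) (2 ^ v + 2 ^ w), (j - 1).choose (i - 1) =
      (2 ^ v + 2 ^ w).choose i - (2 ^ w).choose i := by
    rw [sum_Icc_choose_sub_one _ (Nat.le_add_left _ _), Nat.sub_add_cancel hi]
  apply pbit_eq_of_natCast_eq (by split_ifs <;> norm_num)
  rw [natCast_pbit_eq_of_bit hS hbit, ← Nat.cast_sum, hsum,
    Nat.cast_sub (Nat.choose_le_choose _ (Nat.le_add_left _ _)),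
    choose_two_pow_add_sub_choose_two_pow]
  simp only [mem_insert, mem_singleton]
  split_ifs <;> simp_all

theorem stmt_13_general (v w m : ℕ) (hm : 2 ^ v + 2 ^ w ≤ m) :
    sobol m (2 ^ (2 ^ v + 2 ^ w) - 2 ^ (2 ^ w)) =
      ((2:ℝ) ^ (-(2 ^ w : ℤ)) - (2:ℝ) ^ (-(2 ^ v : ℤ) - (2 ^ w : ℤ)),
       (2:ℝ) ^ (-(2 ^ v : ℤ)) + (2:ℝ) ^ (-(2 ^ v : ℤ) - (2 ^ w : ℤ))) := by
  have hv : 0 < 2 ^ v := Nat.two_pow_pos v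
  have hw : 0 < 2 ^ w := Nat.two_pow_pos w
  have hdigits : Icc (2 ^ w + 1) (2 ^ v + 2 ^ w) ⊆ Icc 1 m := Icc_subset_Icc (by omega) hm
  have hPdigits : ({2 ^ v, 2 ^ v + 2 ^ w} : Finset ℕ) ⊆ Icc 1 m := by
    simp only [insert_subset_iff, singleton_subset_iff, mem_Icc]
    omega
  rw [sobol,
    phi_eq_sum_of_bit hdigits fun i hi ↦ bit_two_pow_add_sub_two_pow _ _ (mem_Icc.1 hi).1,
    phiP_eq_sum_of_pbit hPdigits fun i hi ↦ pbit_two_pow_add_sub_two_pow v w hm (mem_Icc.1 hi).1,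
    sum_Icc_two_zpow_neg (Nat.le_add_left _ _), sum_pair (by omega)]
  push_cast
  ring_nf

theorem stmt_13 (v w m : ℕ) (hvw : w < v) (hm : 2 ^ v + 2 ^ w ≤ m) :
    sobol m (2 ^ (2 ^ v + 2 ^ w) - 2 ^ (2 ^ w)) =
      ((2:ℝ) ^ (-(2 ^ w : ℤ)) - (2:ℝ) ^ (-(2 ^ v : ℤ) - (2 ^ w : ℤ)),
       (2:ℝ) ^ (-(2 ^ v : ℤ)) + (2:ℝ) ^ (-(2 ^ v : ℤ) - (2 ^ w : ℤ))) :=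
  stmt_13_general v w m hm
end
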